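/- arXiv:math/0603354 — 4 statements merged into one kernel-verified Lean document; each statement's English description precedes it below -/
import Mathlib

section
/- Let y be a uniformly recurrent infinite word over a two-letter alphabet with p_n(y) = n + 1 for every n ≥ 0 (so the subshift generated by y is a Sturmian subshift). Then there exists a multi-scale quasiperiodic infinite word x having exactly the same set of factors as y. In particular, every Sturmian subshift is a multi-scale quasiperiodic subshift. -/
open Filter MeasureTheory Topology

/-- The finite word `u` occurs in the infinite word `x` at position `i`. -/
def OccursAt {A : Type*} (x : ℕ → A) (u : List A) (i : ℕ) : Prop :=
  ∀ k : Fin u.length, x (i + k) = u.get k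

/-- The finite word `u` is a factor of the infinite word `x`. -/
def IsFactor {A : Type*} (x : ℕ → A) (u : List A) : Prop :=
  ∃ i, OccursAt x u i

/-- `q` is a quasiperiod of the infinite word `x`: there is a strictly increasing
sequence of occurrence positions of `q`, starting at `0`, with gaps at most `|q|`. -/
def IsQuasiperiod {A : Type*} (x : ℕ → A) (q : List A) : Prop :=
  ∃ i : ℕ → ℕ, StrictMono i ∧ i 0 = 0 ∧ (∀ n, OccursAt x q (i n)) ∧
    ∀ n, i (n + 1) - i n ≤ q.length

/-- An infinite word is multi-scale quasiperiodic if it has infinitely many quasiperiods. -/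
def MultiScaleQuasiperiodic {A : Type*} (x : ℕ → A) : Prop :=
  {q : List A | IsQuasiperiod x q}.Infinite

/-- The word complexity `p_n(x)`: the number of distinct factors of `x` of length `n`. -/
noncomputable def complexity {A : Type*} (x : ℕ → A) (n : ℕ) : ℕ :=
  Set.ncard {u : List A | u.length = n ∧ IsFactor x u}

/-- `#(u, x_{0→n-1})`: the number of occurrences of `u` in the length-`n` prefix of `x`. -/
noncomputable def occCount {A : Type*} (x : ℕ → A) (u : List A) (n : ℕ) : ℕ :=
  Set.ncard {i : ℕ | i + u.length ≤ n ∧ OccursAt x u i}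

/-- `#(u, v)`: the number of occurrences of the finite word `u` in the finite word `v`. -/
noncomputable def countIn {A : Type*} (u v : List A) : ℕ :=
  Set.ncard {i : ℕ | i + u.length ≤ v.length ∧ u <+: v.drop i}

/-- Starting position of the `n`-th block in the integration `∫_w x`:
the `k`-th block is `σ_w(x_k)`, of length `|w| - x_k`. -/
def blockStart {B : Type*} (w : List B) (x : ℕ → ℕ) : ℕ → ℕ
  | 0 => 0
  | n + 1 => blockStart w x n + (w.length - x n)

/-- The integration `∫_w x`: the infinite word `σ_w(x_0) σ_w(x_1) σ_w(x_2) ⋯`, where the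
substitution `σ_w` sends a letter `i` to the prefix of `w` of length `|w| - i`. -/
noncomputable def integrate {B : Type*} (w : List B) (hw : w ≠ []) (x : ℕ → ℕ) (m : ℕ) : B :=
  w.get ⟨(m - blockStart w x (Nat.findGreatest (fun j => blockStart w x j ≤ m) m)) % w.length,
    Nat.mod_lt _ (List.length_pos_iff.mpr hw)⟩

namespace Sturm
variable {A : Type*}

def window (x : ℕ → A) (i n : ℕ) : List A := List.ofFn (fun k : Fin n => x (i + k))

@[simp] lemma length_window (x : ℕ → A) (i n : ℕ) : (window x i n).length = n := by
  simp [window]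

@[simp] lemma getElem_window (x : ℕ → A) {i n k : ℕ} (hk : k < (window x i n).length) :
    (window x i n)[k] = x (i + k) := by
  simp [window]

lemma window_ext {x x' : ℕ → A} {i i' n : ℕ} (h : ∀ k < n, x (i + k) = x' (i' + k)) :
    window x i n = window x' i' n := by
  apply List.ext_getElem (by simp)
  intro k h1 h2
  simp only [getElem_window]
  exact h k (by simpa using h1)

lemma occursAt_iff_window (x : ℕ → A) (u : List A) (i : ℕ) :
    OccursAt x u i ↔ window x i u.length = u := by
  constructor
  · intro h
    apply List.ext_getElem (by simp)
    intro k h1 h2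
    have := h ⟨k, h2⟩
    simp only [List.get_eq_getElem] at this
    simpa using this
  · intro h k
    have := congrArg (fun l : List A => l[(k : ℕ)]?) h
    simp only [List.getElem?_eq_getElem (by simp [k.2] : (k:ℕ) < (window x i u.length).length),
      List.getElem?_eq_getElem (k.2 : (k:ℕ) < u.length), getElem_window,
      Option.some.injEq] at this
    simp only [List.get_eq_getElem]
    exact this

lemma occursAt_window (x : ℕ → A) (i n : ℕ) : OccursAt x (window x i n) i := by
  rw [occursAt_iff_window]; simp [window_ext]

lemma isFactor_window (x : ℕ → A) (i n : ℕ) : IsFactor x (window x i n) :=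
  ⟨i, occursAt_window x i n⟩

lemma isFactor_iff (x : ℕ → A) (u : List A) :
    IsFactor x u ↔ ∃ i, window x i u.length = u := by
  unfold IsFactor
  simp [occursAt_iff_window]

lemma window_append (x : ℕ → A) (i m n : ℕ) :
    window x i (m + n) = window x i m ++ window x (i + m) n := by
  apply List.ext_getElem (by simp)
  intro k h1 h2
  simp only [getElem_window]
  rcases Nat.lt_or_ge k m with h | h
  · rw [List.getElem_append_left (by simpa using h)]
    simp
  · rw [List.getElem_append_right (by simpa using h)]
    simp only [length_window, getElem_window]
    congr 1
    omega

/-- if `u` is an infix of a window, it is itself a window. -/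
lemma eq_window_of_infix {x : ℕ → A} {u : List A} {i n : ℕ} (h : u <:+: window x i n) :
    ∃ j, i ≤ j ∧ j + u.length ≤ i + n ∧ u = window x j u.length := by
  obtain ⟨s, t, hst⟩ := h
  have hlen : s.length + (u.length + t.length) = n := by
    have := congrArg List.length hst
    simp at this
    omega
  refine ⟨i + s.length, by omega, by omega, ?_⟩
  rw [← hlen] at hst
  rw [window_append, window_append] at hst
  have h1 : s ++ (u ++ t) = window x i s.length ++ (window x (i + s.length) u.length ++
      window x (i + s.length + u.length) t.length) := by
    rw [← List.append_assoc, hst]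
  have h2 := (List.append_inj h1 (by simp)).2
  exact (List.append_inj h2 (by simp)).1

lemma isFactor_of_infix {x : ℕ → A} {u v : List A} (huv : u <:+: v) (hv : IsFactor x v) :
    IsFactor x u := by
  rw [isFactor_iff] at hv
  obtain ⟨i, hi⟩ := hv
  rw [← hi] at huv
  obtain ⟨j, _, _, hj⟩ := eq_window_of_infix huv
  rw [isFactor_iff]
  exact ⟨j, hj.symm⟩

lemma window_infix (x : ℕ → A) {i j m n : ℕ} (h1 : j ≤ i) (h2 : i + m ≤ j + n) :
    window x i m <:+: window x j n := by
  have : n = (i - j) + (m + (j + n - i - m)) := by omega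
  rw [this, window_append, window_append]
  have e1 : j + (i - j) = i := by omega
  rw [e1]
  exact ⟨window x j (i - j), window x (i + m) (j + n - i - m), by simp⟩


@[simp] lemma window_one (x : ℕ → A) (i : ℕ) : window x i 1 = [x i] := by
  simp [window, List.ofFn_succ]

section Factors
variable {a b : A} {y : ℕ → A}

/-- The set of factors of length `n`. -/
def Fn (y : ℕ → A) (n : ℕ) : Set (List A) := {u | u.length = n ∧ IsFactor y u}

variable (hp : ∀ n : ℕ, Set.ncard {u : List A | u.length = n ∧ IsFactor y u} = n + 1)

include hp in
lemma Fn_ncard (n : ℕ) : (Fn y n).ncard = n + 1 := hp n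

include hp in
lemma Fn_finite (n : ℕ) : (Fn y n).Finite := by
  by_contra h
  have := Set.Infinite.ncard (s := Fn y n) h
  rw [Fn_ncard hp] at this
  omega

variable (hy : ∀ n, y n = a ∨ y n = b)

include hy in
lemma mem_ab {u : List A} (hu : IsFactor y u) {k : ℕ} (hk : k < u.length) :
    u[k] = a ∨ u[k] = b := by
  rw [isFactor_iff] at hu
  obtain ⟨i, hi⟩ := hu
  have h2 := congrArg (fun l : List A => l[k]?) hi
  simp only [List.getElem?_eq_getElem (by simpa using hk : k < (window y i u.length).length),
    List.getElem?_eq_getElem hk, getElem_window, Option.some.injEq] at h2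
  rw [← h2]
  exact hy _

include hy in
lemma exists_right_ext {u : List A} (hu : IsFactor y u) :
    ∃ cl, (cl = a ∨ cl = b) ∧ IsFactor y (u ++ [cl]) := by
  rw [isFactor_iff] at hu
  obtain ⟨i, hi⟩ := hu
  refine ⟨y (i + u.length), hy _, ?_⟩
  have : window y i (u.length + 1) = u ++ [y (i + u.length)] := by
    rw [window_append, hi, window_one]
  rw [← this]
  exact isFactor_window y i _

variable (hur : ∀ u : List A, IsFactor y u →
      ∃ n : ℕ, 1 ≤ n ∧ ∀ v : List A, v.length = n → IsFactor y v → u <:+: v)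

include hur in
/-- every factor occurs at arbitrarily late positions -/
lemma occ_ge {u : List A} (hu : IsFactor y u) (m : ℕ) :
    ∃ j, m ≤ j ∧ u = window y j u.length := by
  obtain ⟨N, hN1, hN⟩ := hur u hu
  have hv : u <:+: window y m N := hN _ (by simp) (isFactor_window y m N)
  obtain ⟨j, hj1, _, hj3⟩ := eq_window_of_infix hv
  exact ⟨j, hj1, hj3⟩

include hy hur in
lemma exists_left_ext {u : List A} (hu : IsFactor y u) :
    ∃ cl, (cl = a ∨ cl = b) ∧ IsFactor y (cl :: u) := by
  obtain ⟨j, hj1, hj2⟩ := occ_ge hur hu 1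
  refine ⟨y (j - 1), hy _, ?_⟩
  have e1 : j - 1 + 1 = j := by omega
  have : window y (j-1) (1 + u.length) = [y (j-1)] ++ window y j u.length := by
    rw [window_append, window_one, e1]
  rw [← hj2] at this
  have := this ▸ isFactor_window y (j-1) (1 + u.length)
  simpa using this


/-- left special -/
def LS (y : ℕ → A) (a b : A) (u : List A) : Prop :=
  IsFactor y (a :: u) ∧ IsFactor y (b :: u)

/-- right special -/
def RS (y : ℕ → A) (a b : A) (u : List A) : Prop :=
  IsFactor y (u ++ [a]) ∧ IsFactor y (u ++ [b])

lemma LS.factor {u : List A} (h : LS y a b u) : IsFactor y u :=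
  isFactor_of_infix ((List.suffix_cons a u).isInfix) h.1

lemma RS.factor {u : List A} (h : RS y a b u) : IsFactor y u :=
  isFactor_of_infix (List.prefix_append u [a]).isInfix h.1

include hp in
lemma card_le {n : ℕ} (S : Finset (List A)) (h : ∀ u ∈ S, u ∈ Fn y n) : S.card ≤ n + 1 := by
  have h1 : ↑S ⊆ Fn y n := h
  have := Set.ncard_le_ncard h1 (Fn_finite hp n)
  rwa [Set.ncard_coe_finset, Fn_ncard hp] at this

include hp hy in
lemma exists_LS (n : ℕ) : ∃ u, u ∈ Fn y n ∧ LS y a b u := by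
  classical
  set T := (Fn_finite hp (n+1)).toFinset with hT
  set S := (Fn_finite hp n).toFinset with hS
  have hTcard : T.card = n + 2 := by
    rw [hT, ← Set.ncard_eq_toFinset_card _ (Fn_finite hp (n+1)), Fn_ncard hp]
  have hScard : S.card = n + 1 := by
    rw [hS, ← Set.ncard_eq_toFinset_card _ (Fn_finite hp n), Fn_ncard hp]
  have hmaps : ∀ u ∈ T, u.tail ∈ S := by
    intro u hu
    rw [Set.Finite.mem_toFinset] at hu ⊢
    obtain ⟨hul, huf⟩ := hu
    refine ⟨by simp [hul], isFactor_of_infix (List.IsSuffix.isInfix ?_) huf⟩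
    rw [← List.drop_one]
    exact List.drop_suffix 1 u
  obtain ⟨u, hu, v, hv, huv, htail⟩ :=
    Finset.exists_ne_map_eq_of_card_lt_of_maps_to (by omega) hmaps
  rw [Set.Finite.mem_toFinset] at hu hv
  obtain ⟨hul, huf⟩ := hu
  obtain ⟨hvl, hvf⟩ := hv
  match u, hul with
  | c :: u', hul =>
  match v, hvl with
  | d :: v', hvl =>
  simp only [List.tail_cons] at htail
  subst htail
  have hc : c = a ∨ c = b := by
    have := mem_ab hy huf (k := 0) (by simp)
    simpa using this
  have hd : d = a ∨ d = b := by
    have := mem_ab hy hvf (k := 0) (by simp)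
    simpa using this
  have hcd : c ≠ d := by
    intro h; exact huv (by rw [h])
  have hu'm : u' ∈ Fn y n := by
    refine ⟨by simpa using hul, isFactor_of_infix (List.IsSuffix.isInfix ?_) huf⟩
    exact ⟨[c], rfl⟩
  refine ⟨u', hu'm, ?_⟩
  rcases hc with hc | hc <;> rcases hd with hd | hd
  · exact absurd (hc.trans hd.symm) hcd
  · exact ⟨hc ▸ huf, hd ▸ hvf⟩
  · exact ⟨hd ▸ hvf, hc ▸ huf⟩
  · exact absurd (hc.trans hd.symm) hcd

variable (hab : a ≠ b)

/-- the other letter -/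
noncomputable def other (a b c : A) : A :=
  letI := Classical.decEq A
  if c = a then b else a

include hab in
lemma other_spec {c : A} (h : c = a ∨ c = b) :
    (other a b c = a ∨ other a b c = b) ∧ other a b c ≠ c := by
  rcases h with h | h <;> subst h <;> simp [other, hab, hab.symm]

include hab in
lemma other_flip {c : A} (h : c = a ∨ c = b) {u : List A}
    (h1 : IsFactor y (a :: u)) (h2 : IsFactor y (b :: u)) :
    IsFactor y (other a b c :: u) := by
  rcases h with h | h <;> subst h <;> simpa [other, hab, hab.symm]

include hab in
lemma other_flip' {c : A} (h : c = a ∨ c = b) {u : List A}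
    (h1 : IsFactor y (u ++ [a])) (h2 : IsFactor y (u ++ [b])) :
    IsFactor y (u ++ [other a b c]) := by
  rcases h with h | h <;> subst h <;> simpa [other, hab, hab.symm]

include hp hy hur hab in
lemma LS_unique {n : ℕ} {u v : List A} (hu : u ∈ Fn y n) (hv : v ∈ Fn y n)
    (hLu : LS y a b u) (hLv : LS y a b v) : u = v := by
  classical
  by_contra hne
  set S := (Fn_finite hp n).toFinset with hS
  have hScard : S.card = n + 1 := by
    rw [hS, ← Set.ncard_eq_toFinset_card _ (Fn_finite hp n), Fn_ncard hp]
  set f : List A → List A := fun w =>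
    (if h : IsFactor y w then Classical.choose (exists_left_ext hy hur h) else a) :: w with hf
  have hftail : ∀ w, (f w).tail = w := fun w => rfl
  have hfmem : ∀ w ∈ S, f w ∈ Fn y (n + 1) := by
    intro w hw
    rw [Set.Finite.mem_toFinset] at hw
    obtain ⟨hwl, hwf⟩ := hw
    have := Classical.choose_spec (exists_left_ext hy hur hwf)
    refine ⟨by simp [hf, hwl], ?_⟩
    simp only [hf, dif_pos hwf]
    exact this.2
  have hfab : ∀ w, IsFactor y w → ((f w).head? = some a ∨ (f w).head? = some b) := by
    intro w hwf
    have := Classical.choose_spec (exists_left_ext hy hur hwf)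
    simp only [hf, dif_pos hwf, List.head?_cons]
    rcases this.1 with h | h <;> [left; right] <;> rw [h]
  have hfinj : Set.InjOn f ↑S := by
    intro w1 _ w2 _ h
    have := congrArg List.tail h
    simpa [hftail] using this
  set I := S.image f with hI
  have hIcard : I.card = n + 1 := by
    rw [hI, Finset.card_image_of_injOn hfinj, hScard]
  -- the extra extensions of u and v
  have hufac := hLu.factor
  have hvfac := hLv.factor
  set cu := Classical.choose (exists_left_ext hy hur hufac) with hcu_def
  set cv := Classical.choose (exists_left_ext hy hur hvfac) with hcv_def
  have hcu : cu = a ∨ cu = b := (Classical.choose_spec (exists_left_ext hy hur hufac)).1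
  have hcv : cv = a ∨ cv = b := (Classical.choose_spec (exists_left_ext hy hur hvfac)).1
  have hfu : f u = cu :: u := by simp [hf, dif_pos hufac]; rfl
  have hfv : f v = cv :: v := by simp [hf, dif_pos hvfac]; rfl
  set ou := other a b cu with hou_def
  set ov := other a b cv with hov_def
  obtain ⟨hou1, hou2⟩ := other_spec hab hcu
  obtain ⟨hov1, hov2⟩ := other_spec hab hcv
  have hufac2 : IsFactor y (ou :: u) := other_flip hab hcu hLu.1 hLu.2
  have hvfac2 : IsFactor y (ov :: v) := other_flip hab hcv hLv.1 hLv.2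
  have humem : u ∈ S := by rw [hS, Set.Finite.mem_toFinset]; exact hu
  have hvmem : v ∈ S := by rw [hS, Set.Finite.mem_toFinset]; exact hv
  have hovI : (ov :: v) ∉ I := by
    intro hmem
    rw [hI, Finset.mem_image] at hmem
    obtain ⟨w, hw, hfw⟩ := hmem
    have : w = v := by
      have := congrArg List.tail hfw
      simpa [hftail] using this
    subst this
    rw [hfv] at hfw
    exact hov2 (List.cons.injEq .. ▸ hfw).1.symm
  have houI : (ou :: u) ∉ I := by
    intro hmem
    rw [hI, Finset.mem_image] at hmem
    obtain ⟨w, hw, hfw⟩ := hmem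
    have : w = u := by
      have := congrArg List.tail hfw
      simpa [hftail] using this
    subst this
    rw [hfu] at hfw
    exact hou2 (List.cons.injEq .. ▸ hfw).1.symm
  have houv : (ou :: u) ≠ (ov :: v) := by
    intro h
    exact hne (List.cons.injEq .. ▸ h).2
  set J := insert (ou :: u) (insert (ov :: v) I) with hJ
  have hJcard : J.card = n + 3 := by
    rw [hJ, Finset.card_insert_of_notMem (by simp [houI, houv]),
      Finset.card_insert_of_notMem hovI, hIcard]
  have hJsub : ∀ w ∈ J, w ∈ Fn y (n + 1) := by
    intro w hw
    rw [hJ, Finset.mem_insert, Finset.mem_insert] at hw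
    rcases hw with h | h | h
    · subst h; exact ⟨by simp [hu.1], hufac2⟩
    · subst h; exact ⟨by simp [hv.1], hvfac2⟩
    · rw [hI, Finset.mem_image] at h
      obtain ⟨w', hw', rfl⟩ := h
      exact hfmem w' hw'
  have := card_le hp J hJsub
  omega


include hp hy hab in
lemma RS_unique {n : ℕ} {u v : List A} (hu : u ∈ Fn y n) (hv : v ∈ Fn y n)
    (hLu : RS y a b u) (hLv : RS y a b v) : u = v := by
  classical
  by_contra hne
  set S := (Fn_finite hp n).toFinset with hS
  have hScard : S.card = n + 1 := by
    rw [hS, ← Set.ncard_eq_toFinset_card _ (Fn_finite hp n), Fn_ncard hp]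
  set f : List A → List A := fun w =>
    w ++ [if h : IsFactor y w then Classical.choose (exists_right_ext hy h) else a] with hf
  have hfdl : ∀ w, (f w).dropLast = w := fun w => by simp [hf]
  have hfmem : ∀ w ∈ S, f w ∈ Fn y (n + 1) := by
    intro w hw
    rw [Set.Finite.mem_toFinset] at hw
    obtain ⟨hwl, hwf⟩ := hw
    have := Classical.choose_spec (exists_right_ext hy hwf)
    refine ⟨by simp [hf, hwl], ?_⟩
    simp only [hf, dif_pos hwf]
    exact this.2
  have hfinj : Set.InjOn f ↑S := by
    intro w1 _ w2 _ h
    have := congrArg List.dropLast h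
    simpa [hfdl] using this
  set I := S.image f with hI
  have hIcard : I.card = n + 1 := by
    rw [hI, Finset.card_image_of_injOn hfinj, hScard]
  have hufac := hLu.factor
  have hvfac := hLv.factor
  set cu := Classical.choose (exists_right_ext hy hufac) with hcu_def
  set cv := Classical.choose (exists_right_ext hy hvfac) with hcv_def
  have hcu : cu = a ∨ cu = b := (Classical.choose_spec (exists_right_ext hy hufac)).1
  have hcv : cv = a ∨ cv = b := (Classical.choose_spec (exists_right_ext hy hvfac)).1
  have hfu : f u = u ++ [cu] := by simp [hf, dif_pos hufac]; rfl
  have hfv : f v = v ++ [cv] := by simp [hf, dif_pos hvfac]; rfl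
  set ou := other a b cu with hou_def
  set ov := other a b cv with hov_def
  obtain ⟨hou1, hou2⟩ := other_spec hab hcu
  obtain ⟨hov1, hov2⟩ := other_spec hab hcv
  have hufac2 : IsFactor y (u ++ [ou]) := other_flip' hab hcu hLu.1 hLu.2
  have hvfac2 : IsFactor y (v ++ [ov]) := other_flip' hab hcv hLv.1 hLv.2
  have hlast : ∀ (w : List A) (c : A), (w ++ [c]).getLast? = some c := by
    intro w c
    exact List.getLast?_concat
  have hovI : (v ++ [ov]) ∉ I := by
    intro hmem
    rw [hI, Finset.mem_image] at hmem
    obtain ⟨w, hw, hfw⟩ := hmem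
    have hwv : w = v := by
      have := congrArg List.dropLast hfw
      simpa [hfdl] using this
    subst hwv
    rw [hfv] at hfw
    have := congrArg List.getLast? hfw
    rw [hlast, hlast, Option.some.injEq] at this
    exact hov2 this.symm
  have houI : (u ++ [ou]) ∉ I := by
    intro hmem
    rw [hI, Finset.mem_image] at hmem
    obtain ⟨w, hw, hfw⟩ := hmem
    have hwu : w = u := by
      have := congrArg List.dropLast hfw
      simpa [hfdl] using this
    subst hwu
    rw [hfu] at hfw
    have := congrArg List.getLast? hfw
    rw [hlast, hlast, Option.some.injEq] at this
    exact hou2 this.symm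
  have houv : (u ++ [ou]) ≠ (v ++ [ov]) := by
    intro h
    have := congrArg List.dropLast h
    simp only [List.dropLast_concat] at this
    exact hne this
  set J := insert (u ++ [ou]) (insert (v ++ [ov]) I) with hJ
  have hJcard : J.card = n + 3 := by
    rw [hJ, Finset.card_insert_of_notMem (by simp [houI, houv]),
      Finset.card_insert_of_notMem hovI, hIcard]
  have hJsub : ∀ w ∈ J, w ∈ Fn y (n + 1) := by
    intro w hw
    rw [hJ, Finset.mem_insert, Finset.mem_insert] at hw
    rcases hw with h | h | h
    · subst h; exact ⟨by simp [hu.1], hufac2⟩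
    · subst h; exact ⟨by simp [hv.1], hvfac2⟩
    · rw [hI, Finset.mem_image] at h
      obtain ⟨w', hw', rfl⟩ := h
      exact hfmem w' hw'
  have := card_le hp J hJsub
  omega


lemma LS_of_prefix {w u : List A} (h : w <+: u) (hu : LS y a b u) : LS y a b w :=
  ⟨isFactor_of_infix (List.IsPrefix.isInfix (by simp [List.cons_prefix_cons, h])) hu.1,
   isFactor_of_infix (List.IsPrefix.isInfix (by simp [List.cons_prefix_cons, h])) hu.2⟩

/-- the unique left-special factor of length `n` -/
noncomputable def Lspec (n : ℕ) : List A := (exists_LS hp hy n).choose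

lemma Lspec_mem (n : ℕ) : Lspec hp hy n ∈ Fn y n := (exists_LS hp hy n).choose_spec.1

lemma Lspec_LS (n : ℕ) : LS y a b (Lspec hp hy n) := (exists_LS hp hy n).choose_spec.2

include hur hab in
lemma Lspec_eq {n : ℕ} {u : List A} (hu : u ∈ Fn y n) (hLu : LS y a b u) :
    u = Lspec hp hy n :=
  LS_unique hp hy hur hab hu (Lspec_mem hp hy n) hLu (Lspec_LS hp hy n)

include hur hab in
lemma Lspec_concat (n : ℕ) : ∃ t0 : A, Lspec hp hy (n+1) = Lspec hp hy n ++ [t0] := by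
  have hlen : (Lspec hp hy (n+1)).length = n + 1 := (Lspec_mem hp hy (n+1)).1
  set p := (Lspec hp hy (n+1)).take n with hp_def
  have hpre : p <+: Lspec hp hy (n+1) := List.take_prefix n _
  have hpmem : p ∈ Fn y n := by
    refine ⟨by simp [hp_def, hlen], isFactor_of_infix hpre.isInfix (Lspec_mem hp hy (n+1)).2⟩
  have hpLS : LS y a b p := LS_of_prefix hpre (Lspec_LS hp hy (n+1))
  have hpeq : p = Lspec hp hy n := Lspec_eq hp hy hur hab hpmem hpLS
  have hdrop : ((Lspec hp hy (n+1)).drop n).length = 1 := by simp [hlen]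
  obtain ⟨t0, ht0⟩ := List.length_eq_one_iff.mp hdrop
  refine ⟨t0, ?_⟩
  rw [← hpeq, hp_def, ← ht0]
  simp

/-- the characteristic word -/
noncomputable def cw : ℕ → A := fun n => ((Lspec hp hy (n+1)).getLast?).getD a

include hur hab in
lemma window_cw (n : ℕ) : window (cw hp hy) 0 n = Lspec hp hy n := by
  induction n with
  | zero =>
    have : (Lspec hp hy 0).length = 0 := (Lspec_mem hp hy 0).1
    rw [List.eq_nil_of_length_eq_zero this]
    simp [window]
  | succ n ih =>
    obtain ⟨t0, ht0⟩ := Lspec_concat hp hy hur hab n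
    have hc : cw hp hy n = t0 := by
      unfold cw
      rw [ht0, List.getLast?_concat]
      rfl
    rw [window_append (cw hp hy) 0 n 1, ih, window_one, ht0]
    simp [hc]

include hur hab in
lemma isFactor_cw_iff (u : List A) : IsFactor (cw hp hy) u ↔ IsFactor y u := by
  constructor
  · intro hu
    rw [isFactor_iff] at hu
    obtain ⟨i, hi⟩ := hu
    have : window (cw hp hy) i u.length <:+: window (cw hp hy) 0 (i + u.length) :=
      window_infix _ (by omega) (by omega)
    rw [hi, window_cw hp hy hur hab] at this
    exact isFactor_of_infix this (Lspec_mem hp hy (i + u.length)).2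
  · intro hu
    obtain ⟨N, hN1, hN⟩ := hur u hu
    have : u <:+: Lspec hp hy N := hN _ (Lspec_mem hp hy N).1 (Lspec_mem hp hy N).2
    rw [← window_cw hp hy hur hab] at this
    exact isFactor_of_infix this (isFactor_window _ 0 N)

include hur hab in
lemma cw_recur {u : List A} (hu : IsFactor y u) (m : ℕ) :
    ∃ j, m ≤ j ∧ OccursAt (cw hp hy) u j := by
  obtain ⟨N, hN1, hN⟩ := hur u hu
  have hwf : IsFactor y (window (cw hp hy) m N) := by
    rw [← isFactor_cw_iff hp hy hur hab]
    exact isFactor_window _ m N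
  have : u <:+: window (cw hp hy) m N := hN _ (by simp) hwf
  obtain ⟨j, hj1, _, hj3⟩ := eq_window_of_infix this
  exact ⟨j, hj1, by rw [occursAt_iff_window]; exact hj3.symm⟩


lemma window_inj {x x' : ℕ → A} {i i' n : ℕ} (h : window x i n = window x' i' n) :
    ∀ k < n, x (i + k) = x' (i' + k) := by
  intro k hk
  have := congrArg (fun l : List A => l[k]?) h
  simpa [List.getElem?_eq_getElem (by simpa using hk : k < (window x i n).length),
    List.getElem?_eq_getElem (by simpa using hk : k < (window x' i' n).length)] using this

include hp hy in
lemma isFactor_single_b : IsFactor y [b] := by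
  by_contra hb
  have hsub : Fn y 1 ⊆ {[a]} := by
    rintro u ⟨hul, huf⟩
    have h0 := mem_ab hy huf (k := 0) (by omega)
    match u, hul, h0, huf with
    | [c], _, h0, huf =>
      rcases h0 with h | h
      · simp_all
      · simp only [List.getElem_cons_zero] at h
        subst h
        exact absurd huf hb
  have := Set.ncard_le_ncard hsub (Set.finite_singleton _)
  rw [Fn_ncard hp 1, Set.ncard_singleton] at this
  omega

include hp hy hab hur in
lemma exists_no_replicate_a : ∃ K, ¬ IsFactor y (List.replicate K a) := by
  obtain ⟨N, hN1, hN⟩ := hur [b] (isFactor_single_b hp hy)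
  refine ⟨N, fun hf => ?_⟩
  have : [b] <:+: List.replicate N a := hN _ (by simp) hf
  have hb : b ∈ List.replicate N a := this.sublist.mem (by simp)
  rw [List.mem_replicate] at hb
  exact hab hb.2.symm

include hp hy in
lemma isFactor_single_a : IsFactor y [a] := by
  by_contra hb
  have hsub : Fn y 1 ⊆ {[b]} := by
    rintro u ⟨hul, huf⟩
    have h0 := mem_ab hy huf (k := 0) (by omega)
    match u, hul, h0, huf with
    | [c], _, h0, huf =>
      rcases h0 with h | h
      · simp only [List.getElem_cons_zero] at h
        subst h
        exact absurd huf hb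
      · simp_all
  have := Set.ncard_le_ncard hsub (Set.finite_singleton _)
  rw [Fn_ncard hp 1, Set.ncard_singleton] at this
  omega

include hp hy hab hur in
lemma exists_no_replicate_b : ∃ K, ¬ IsFactor y (List.replicate K b) := by
  obtain ⟨N, hN1, hN⟩ := hur [a] (isFactor_single_a hp hy)
  refine ⟨N, fun hf => ?_⟩
  have : [a] <:+: List.replicate N b := hN _ (by simp) hf
  have ha : a ∈ List.replicate N b := this.sublist.mem (by simp)
  rw [List.mem_replicate] at ha
  exact hab ha.2

include hp hy hab hur in
/-- no long factor is a "self-overlap" word `v` with `v.take n = v.drop 1`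
(which would force it to be constant) -/
lemma exists_no_selfloop : ∃ K, ∀ n, K ≤ n → ∀ j : ℕ,
    ¬ (window y j n = window y (j+1) n) := by
  obtain ⟨Ka, hKa⟩ := exists_no_replicate_a hp hy hur hab
  obtain ⟨Kb, hKb⟩ := exists_no_replicate_b hp hy hur hab
  refine ⟨max Ka Kb, fun n hn j hw => ?_⟩
  have hconst : ∀ k ≤ n, y (j + k) = y j := by
    intro k hk
    induction k with
    | zero => rfl
    | succ k ih =>
      have h1 := window_inj hw k (by omega)
      have e1 : j + 1 + k = j + (k+1) := by omega
      rw [e1] at h1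
      rw [← h1]
      exact ih (by omega)
  rcases hy j with hj | hj
  · apply hKa
    have : List.replicate Ka a = window y j Ka := by
      apply List.ext_getElem (by simp)
      intro k h1 h2
      simp only [getElem_window, List.getElem_replicate]
      rw [hconst k (by simp at h1; omega), hj]
    rw [this]
    exact isFactor_window y j Ka
  · apply hKb
    have : List.replicate Kb b = window y j Kb := by
      apply List.ext_getElem (by simp)
      intro k h1 h2
      simp only [getElem_window, List.getElem_replicate]
      rw [hconst k (by simp at h1; omega), hj]
    rw [this]
    exact isFactor_window y j Kb


include hp hy hur hab in
/-- there are bispecial left-special factors of arbitrarily large length -/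
lemma exists_RS_Lspec (n : ℕ) : ∃ m, n ≤ m ∧ RS y a b (Lspec hp hy m) := by
  by_contra hcon
  push_neg at hcon
  -- forcing: every occurrence of `Lspec m` extends to an occurrence of `Lspec (m+1)`
  have force : ∀ m, n ≤ m → ∀ p, OccursAt y (Lspec hp hy m) p →
      OccursAt y (Lspec hp hy (m+1)) p := by
    intro m hm p hocc
    have hlen : (Lspec hp hy m).length = m := (Lspec_mem hp hy m).1
    rw [occursAt_iff_window, hlen] at hocc
    obtain ⟨t0, ht0⟩ := Lspec_concat hp hy hur hab m
    have ht0ab : t0 = a ∨ t0 = b := by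
      have hlen1 : (Lspec hp hy (m+1)).length = m + 1 := (Lspec_mem hp hy (m+1)).1
      have := mem_ab hy (Lspec_mem hp hy (m+1)).2 (k := m) (by omega)
      have hg : (Lspec hp hy (m+1))[m]'(by omega) = t0 := by
        simp only [ht0]
        rw [List.getElem_append_right (by omega)]
        simp [hlen]
      rwa [hg] at this
    have hyp : y (p + m) = a ∨ y (p + m) = b := hy _
    have hfac1 : IsFactor y (Lspec hp hy m ++ [y (p + m)]) := by
      have : window y p (m + 1) = Lspec hp hy m ++ [y (p + m)] := by
        rw [window_append, hocc, window_one]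
      rw [← this]
      exact isFactor_window y p (m+1)
    have hfac2 : IsFactor y (Lspec hp hy m ++ [t0]) := ht0 ▸ (Lspec_mem hp hy (m+1)).2
    have heq : y (p + m) = t0 := by
      by_contra hne
      apply hcon m hm
      constructor
      · rcases hyp with h | h
        · exact h ▸ hfac1
        · rcases ht0ab with h' | h'
          · exact h' ▸ hfac2
          · exact absurd (h.trans h'.symm) hne
      · rcases hyp with h | h
        · rcases ht0ab with h' | h'
          · exact absurd (h.trans h'.symm) hne
          · exact h' ▸ hfac2
        · exact h ▸ hfac1
    rw [occursAt_iff_window, (Lspec_mem hp hy (m+1)).1, ht0]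
    rw [window_append, hocc, window_one, heq]
  have force2 : ∀ p, OccursAt y (Lspec hp hy n) p → ∀ k,
      OccursAt y (Lspec hp hy (n + k)) p := by
    intro p hocc k
    induction k with
    | zero => exact hocc
    | succ k ih => exact force (n + k) (by omega) p ih
  -- two occurrences of `Lspec n`
  obtain ⟨p1, hp1⟩ := (Lspec_mem hp hy n).2
  obtain ⟨p2, hp2a, hp2b⟩ := occ_ge hur (Lspec_mem hp hy n).2 (p1 + 1)
  rw [(Lspec_mem hp hy n).1] at hp2b
  have hp2 : OccursAt y (Lspec hp hy n) p2 := by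
    rw [occursAt_iff_window, (Lspec_mem hp hy n).1]
    exact hp2b.symm
  obtain ⟨T, hT⟩ : ∃ T, p2 = p1 + T := ⟨p2 - p1, by omega⟩
  have hT1 : 1 ≤ T := by omega
  -- y is eventually periodic
  have key : ∀ s, y (p1 + s) = y (p2 + s) := by
    intro s
    have h1 := force2 p1 hp1 (s + 1)
    have h2 := force2 p2 hp2 (s + 1)
    rw [occursAt_iff_window, (Lspec_mem hp hy (n + (s+1))).1] at h1 h2
    exact window_inj (h1.trans h2.symm) s (by omega)
  have per : ∀ s, y (p1 + s) = y (p1 + s % T) := by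
    intro s
    induction s using Nat.strong_induction_on with
    | _ s ih =>
      rcases Nat.lt_or_ge s T with h | h
      · rw [Nat.mod_eq_of_lt h]
      · have e1 : s = (s - T) + T := by omega
        have e2 : p1 + s = p2 + (s - T) := by omega
        have e3 : s % T = (s - T) % T := Nat.mod_eq_sub_mod h
        rw [e2, ← key (s - T), e3]
        exact ih (s - T) (by omega)
  -- bounded complexity: contradiction
  have hT0 : 0 < T := hT1
  classical
  set φ : List A → ℕ := fun u =>
    if h : ∃ i, window y i (p1 + T) = u then
      (if h.choose < p1 then h.choose else p1 + ((h.choose - p1) % T))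
    else 0 with hφ
  have hφmem : ∀ u ∈ Fn y (p1 + T), φ u ∈ (↑(Finset.range (p1 + T)) : Set ℕ) := by
    rintro u ⟨hul, huf⟩
    rw [isFactor_iff, hul] at huf
    simp only [hφ, dif_pos huf, Finset.coe_range, Set.mem_Iio]
    split
    · omega
    · have := Nat.mod_lt (huf.choose - p1) hT0
      omega
  have hφinj : Set.InjOn φ (Fn y (p1 + T)) := by
    rintro u ⟨hul, huf⟩ v ⟨hvl, hvf⟩ heq
    rw [isFactor_iff, hul] at huf
    rw [isFactor_iff, hvl] at hvf
    simp only [hφ, dif_pos huf, dif_pos hvf] at heq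
    set iu := huf.choose with hiu
    set iv := hvf.choose with hiv
    have hu' : window y iu (p1 + T) = u := huf.choose_spec
    have hv' : window y iv (p1 + T) = v := hvf.choose_spec
    rcases Nat.lt_or_ge iu p1 with h1 | h1 <;> rcases Nat.lt_or_ge iv p1 with h2 | h2
    · rw [if_pos h1, if_pos h2] at heq
      rw [← hu', ← hv', heq]
    · rw [if_pos h1, if_neg (by omega)] at heq
      omega
    · rw [if_neg (by omega), if_pos h2] at heq
      omega
    · rw [if_neg (by omega), if_neg (by omega)] at heq
      have hmod : (iu - p1) % T = (iv - p1) % T := by omega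
      rw [← hu', ← hv']
      apply window_ext
      intro k hk
      have e1 : iu + k = p1 + ((iu - p1) + k) := by omega
      have e2 : iv + k = p1 + ((iv - p1) + k) := by omega
      rw [e1, e2, per ((iu - p1) + k), per ((iv - p1) + k)]
      congr 2
      exact Nat.ModEq.add_right k hmod
  have hcard := Set.ncard_le_ncard_of_injOn φ hφmem hφinj (Set.toFinite _)
  rw [Fn_ncard hp, Set.ncard_coe_finset, Finset.card_range] at hcard
  omega


include hur hab in
lemma cw_ab (m : ℕ) : cw hp hy m = a ∨ cw hp hy m = b := by
  have h1 := window_cw hp hy hur hab (m+1)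
  have h2 := congrArg (fun l : List A => l[m]?) h1
  have hlt1 : m < (window (cw hp hy) 0 (m+1)).length := by simp
  have hlt2 : m < (Lspec hp hy (m+1)).length := by
    rw [(Lspec_mem hp hy (m+1)).1]; omega
  simp only [List.getElem?_eq_getElem hlt1, List.getElem?_eq_getElem hlt2,
    getElem_window, Option.some.injEq] at h2
  rw [Nat.zero_add] at h2
  rw [h2]
  exact mem_ab hy (Lspec_mem hp hy (m+1)).2 hlt2

lemma window_take (x : ℕ → A) (i n : ℕ) :
    (window x i (n+1)).take n = window x i n := by
  rw [window_append x i n 1]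
  exact List.take_left' (by simp)

lemma window_drop1 (x : ℕ → A) (i n : ℕ) :
    (window x i (n+1)).drop 1 = window x (i+1) n := by
  have e : n + 1 = 1 + n := by omega
  rw [e, window_append x i 1 n, window_one]
  simp

lemma window_cons (x : ℕ → A) (i n : ℕ) :
    window x i (n+1) = x i :: window x (i+1) n := by
  have e : n + 1 = 1 + n := by omega
  rw [e, window_append x i 1 n, window_one]
  simp

include hp hy hur hab in
/-- THE GAP LEMMA: consecutive occurrences in `cw` of a bispecial `Lspec n`
with no self-overlap are at distance at most `n`. -/
lemma gap_le {n : ℕ} (hn : 1 ≤ n)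
    (hRS : RS y a b (Lspec hp hy n))
    (hsl : ∀ j : ℕ, ¬ (window y j n = window y (j+1) n))
    {p p' : ℕ} (hocc : OccursAt (cw hp hy) (Lspec hp hy n) p)
    (hocc' : OccursAt (cw hp hy) (Lspec hp hy n) p')
    (hlt : p < p')
    (hbetween : ∀ r, p < r → r < p' → ¬ OccursAt (cw hp hy) (Lspec hp hy n) r) :
    p' - p ≤ n := by
  classical
  set c := cw hp hy with hc
  set w := Lspec hp hy n with hw
  have hwlen : w.length = n := (Lspec_mem hp hy n).1
  set g := p' - p with hg
  have hg1 : 1 ≤ g := by omega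
  set V : ℕ → List A := fun i => window c (p+i) n with hV
  set E : ℕ → List A := fun i => window c (p+i) (n+1) with hE
  have hoccV : ∀ i, OccursAt c w (p+i) ↔ V i = w := by
    intro i
    rw [occursAt_iff_window, hwlen]
  have hV0 : V 0 = w := by
    have := (hoccV 0).mp (by simpa using hocc)
    simpa using this
  have hVg : V g = w := by
    have e1 : p + g = p' := by omega
    apply (hoccV g).mp
    rw [e1]
    exact hocc'
  have hVne : ∀ i, 0 < i → i < g → V i ≠ w := by
    intro i h1 h2 hcon
    exact hbetween (p+i) (by omega) (by omega) ((hoccV i).mpr hcon)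
  -- every V i is a factor of y of length n
  have hVmem : ∀ i, V i ∈ Fn y n := by
    intro i
    refine ⟨by simp [hV], ?_⟩
    rw [← isFactor_cw_iff hp hy hur hab]
    exact isFactor_window _ _ _
  have hEmem : ∀ i, E i ∈ Fn y (n+1) := by
    intro i
    refine ⟨by simp [hE], ?_⟩
    rw [← isFactor_cw_iff hp hy hur hab]
    exact isFactor_window _ _ _
  have hwmem : w ∈ Fn y n := Lspec_mem hp hy n
  -- determinism: non-special vertices extend uniquely
  have hdet : ∀ i j, 0 < i → i < g → V i = V j → c (p + i + n) = c (p + j + n) := by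
    intro i j h1 h2 hVij
    by_contra hne
    have hvRS : RS y a b (V i) := by
      have hfa : IsFactor y (V i ++ [c (p + i + n)]) := by
        have hEi : E i = V i ++ [c (p + i + n)] := by
          show window c (p+i) (n+1) = window c (p+i) n ++ [c (p + i + n)]
          rw [window_append, window_one]
        rw [← hEi]
        exact (hEmem i).2
      have hfb : IsFactor y (V i ++ [c (p + j + n)]) := by
        have hEj : E j = V j ++ [c (p + j + n)] := by
          show window c (p+j) (n+1) = window c (p+j) n ++ [c (p + j + n)]
          rw [window_append, window_one]
        rw [hVij, ← hEj]
        exact (hEmem j).2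
      rcases cw_ab hp hy hur hab (p + i + n) with h | h <;>
        rcases cw_ab hp hy hur hab (p + j + n) with h' | h'
      · exact absurd (h.trans h'.symm) hne
      · exact ⟨h ▸ hfa, h' ▸ hfb⟩
      · exact ⟨h' ▸ hfb, h ▸ hfa⟩
      · exact absurd (h.trans h'.symm) hne
    have := RS_unique hp hy hab (hVmem i) hwmem hvRS hRS
    exact hVne i h1 h2 this
  -- injectivity of E on [0, g)
  have hEinj : ∀ i j, i < g → j < g → E i = E j → i = j := by
    intro i j hi hj heq
    by_contra hne
    -- wlog i < j
    wlog hij : i < j generalizing i j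
    · exact this j i hj hi heq.symm (Ne.symm hne) (by omega)
    have key : ∀ k, k ≤ g - j → V (i+k) = V (j+k) := by
      intro k
      induction k with
      | zero =>
        intro _
        apply window_ext
        intro s hs
        have := window_inj heq s (by omega)
        simpa using this
      | succ k ih =>
        intro hk
        have hkk : k ≤ g - j := by omega
        have hVk := ih hkk
        have hlast : c (p + (i+k) + n) = c (p + (j+k) + n) := by
          rcases Nat.eq_zero_or_pos k with rfl | hkpos
          · have := window_inj heq n (by omega)
            simpa using this
          · exact hdet (i+k) (j+k) (by omega) (by omega) hVk
        apply window_ext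
        intro s hs
        rcases Nat.lt_or_ge s (n-1) with hsn | hsn
        · have := window_inj (congrArg id hVk : window c (p+(i+k)) n = window c (p+(j+k)) n)
            (s+1) (by omega)
          have e1 : p + (i+k) + (s+1) = p + (i + (k+1)) + s := by omega
          have e2 : p + (j+k) + (s+1) = p + (j + (k+1)) + s := by omega
          rwa [e1, e2] at this
        · have hsn' : s = n - 1 := by omega
          subst hsn'
          have e1 : p + (i + (k+1)) + (n-1) = p + (i+k) + n := by omega
          have e2 : p + (j + (k+1)) + (n-1) = p + (j+k) + n := by omega
          rw [e1, e2]
          exact hlast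
    have hfin := key (g - j) (le_refl _)
    have e3 : j + (g - j) = g := by omega
    rw [e3, hVg] at hfin
    exact hVne (i + (g - j)) (by omega) (by omega) hfin
  -- the two extra words
  set e1 : List A := w ++ [other a b (c (p + n))] with he1
  set e2 : List A := other a b (c (p + g - 1)) :: w with he2
  have hcpn := cw_ab hp hy hur hab (p + n)
  have hcpg := cw_ab hp hy hur hab (p + g - 1)
  have he1fac : IsFactor y e1 := other_flip' hab hcpn hRS.1 hRS.2
  have he2fac : IsFactor y e2 := other_flip hab hcpg (Lspec_LS hp hy n).1 (Lspec_LS hp hy n).2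
  have hE0 : E 0 = w ++ [c (p + n)] := by
    show window c (p+0) (n+1) = w ++ [c (p + n)]
    rw [window_append, window_one]
    have h9 : window c (p+0) n = w := hV0
    rw [h9]
    norm_num
  have hEg1 : E (g-1) = c (p + g - 1) :: w := by
    have e4 : p + (g-1) = p + g - 1 := by omega
    have e5 : (p + g - 1) + 1 = p + g := by omega
    show window c (p+(g-1)) (n+1) = c (p + g - 1) :: w
    rw [e4, window_cons, e5]
    have : window c (p + g) n = w := by
      have e6 : p + g = p' := by omega
      rw [e6]
      rw [occursAt_iff_window, hwlen] at hocc'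
      exact hocc'
    rw [this]
  have htakeE : ∀ i, (E i).take n = V i := fun i => window_take c (p+i) n
  have hdropE : ∀ i, (E i).drop 1 = V (i+1) := by
    intro i
    show (window c (p+i) (n+1)).drop 1 = window c (p+(i+1)) n
    rw [window_drop1]
    try rfl
    try (congr 1; omega)
  have he1take : e1.take n = w := by
    rw [he1]
    exact List.take_left' hwlen
  have he2drop : e2.drop 1 = w := by rw [he2]; simp
  -- e1 is not any E i
  have he1E : ∀ i, i < g → e1 ≠ E i := by
    intro i hi hcon
    rcases Nat.eq_zero_or_pos i with rfl | hipos
    · rw [hE0, he1] at hcon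
      have := List.append_inj_right' hcon (by rfl)
      simp only [List.cons.injEq] at this
      exact (other_spec hab hcpn).2 this.1
    · have := congrArg (List.take n) hcon
      rw [he1take, htakeE] at this
      exact hVne i hipos hi this.symm
  -- e2 is not any E i
  have he2E : ∀ i, i < g → e2 ≠ E i := by
    intro i hi hcon
    rcases Nat.lt_or_ge i (g-1) with hig | hig
    · have := congrArg (List.drop 1) hcon
      rw [he2drop, hdropE] at this
      exact hVne (i+1) (by omega) (by omega) this.symm
    · have hig' : i = g - 1 := by omega
      subst hig'
      rw [hEg1, he2] at hcon
      simp only [List.cons.injEq] at hcon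
      exact (other_spec hab hcpg).2 hcon.1
  -- e1 ≠ e2
  have he12 : e1 ≠ e2 := by
    intro hcon
    obtain ⟨q, hq⟩ := he1fac
    rw [occursAt_iff_window] at hq
    have hqlen : e1.length = n + 1 := by rw [he1]; simp [hwlen]
    rw [hqlen] at hq
    apply hsl q
    have h1 : window y q n = w := by
      have := congrArg (List.take n) hq
      rwa [window_take, he1take] at this
    have h2 : window y (q+1) n = w := by
      have := congrArg (List.drop 1) hq
      rw [window_drop1] at this
      rw [this, hcon, he2drop]
    rw [h1, h2]
  -- counting
  set I := (Finset.range g).image E with hI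
  have hIcard : I.card = g := by
    rw [hI, Finset.card_image_of_injOn, Finset.card_range]
    intro i hi j hj hij
    simp only [Finset.coe_range, Set.mem_Iio] at hi hj
    exact hEinj i j hi hj hij
  have he1I : e1 ∉ I := by
    intro hmem
    rw [hI, Finset.mem_image] at hmem
    obtain ⟨i, hi, hEi⟩ := hmem
    rw [Finset.mem_range] at hi
    exact he1E i hi hEi.symm
  have he2I : e2 ∉ I := by
    intro hmem
    rw [hI, Finset.mem_image] at hmem
    obtain ⟨i, hi, hEi⟩ := hmem
    rw [Finset.mem_range] at hi
    exact he2E i hi hEi.symm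
  set J := insert e1 (insert e2 I) with hJ
  have hJcard : J.card = g + 2 := by
    rw [hJ, Finset.card_insert_of_notMem (by simp [he1I, he12]),
      Finset.card_insert_of_notMem he2I, hIcard]
  have hJsub : ∀ u ∈ J, u ∈ Fn y (n+1) := by
    intro u hu
    rw [hJ, Finset.mem_insert, Finset.mem_insert] at hu
    rcases hu with h | h | h
    · subst h; exact ⟨by rw [he1]; simp [hwlen], he1fac⟩
    · subst h; exact ⟨by rw [he2]; simp [hwlen], he2fac⟩
    · rw [hI, Finset.mem_image] at h
      obtain ⟨i, _, rfl⟩ := h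
      exact hEmem i
  have := card_le hp J hJsub
  omega


include hp hy hur hab in
lemma isQuasiperiod_Lspec {n : ℕ} (hn : 1 ≤ n)
    (hRS : RS y a b (Lspec hp hy n))
    (hsl : ∀ j : ℕ, ¬ (window y j n = window y (j+1) n)) :
    IsQuasiperiod (cw hp hy) (Lspec hp hy n) := by
  classical
  set c := cw hp hy with hc
  set w := Lspec hp hy n with hw
  have hwlen : w.length = n := (Lspec_mem hp hy n).1
  have hwfac : IsFactor y w := (Lspec_mem hp hy n).2
  have hex : ∀ p : ℕ, ∃ r, OccursAt c w (p + 1 + r) := by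
    intro p
    obtain ⟨j, hj1, hj2⟩ := cw_recur hp hy hur hab hwfac (p+1)
    exact ⟨j - (p+1), by rwa [show p + 1 + (j - (p+1)) = j by omega]⟩
  set f : ℕ → ℕ := fun p => p + 1 + Nat.find (hex p) with hf
  have hfeq : ∀ p, f p = p + 1 + Nat.find (hex p) := fun _ => rfl
  set seq : ℕ → ℕ := fun k => Nat.rec 0 (fun _ ih => f ih) k with hseq
  have hseq0 : seq 0 = 0 := rfl
  have hseqS : ∀ k, seq (k+1) = f (seq k) := fun k => rfl
  have hocc0 : OccursAt c w 0 := by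
    rw [occursAt_iff_window, hwlen]
    exact window_cw hp hy hur hab n
  have hoccseq : ∀ k, OccursAt c w (seq k) := by
    intro k
    induction k with
    | zero => exact hocc0
    | succ k ih =>
      rw [hseqS, hfeq]
      exact Nat.find_spec (hex (seq k))
  have hmono : StrictMono seq := by
    apply strictMono_nat_of_lt_succ
    intro k
    rw [hseqS, hfeq]
    omega
  refine ⟨seq, hmono, hseq0, hoccseq, ?_⟩
  intro k
  rw [hwlen, hseqS, hfeq]
  have hlt : seq k < f (seq k) := by rw [hfeq]; omega
  have hbet : ∀ r, seq k < r → r < f (seq k) → ¬ OccursAt c w r := by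
    intro r h1 h2 hocc
    have he : r = seq k + 1 + (r - (seq k + 1)) := by omega
    rw [he] at hocc
    have := Nat.find_min (hex (seq k)) (m := r - (seq k + 1)) (by rw [hfeq] at h2; omega)
    exact this hocc
  have := gap_le hp hy hur hab hn hRS hsl (hoccseq k) (hoccseq (k+1))
    (by rw [hseqS]; exact hlt) (by rw [hseqS]; exact hbet)
  rw [hseqS, hfeq] at this
  omega

include hp hy hur hab in
lemma multiScale : MultiScaleQuasiperiodic (cw hp hy) := by
  classical
  obtain ⟨K, hK⟩ := exists_no_selfloop hp hy hur hab
  set g : ℕ → ℕ := fun k => Nat.rec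
    (exists_RS_Lspec hp hy hur hab (max K 1)).choose
    (fun _ ih => (exists_RS_Lspec hp hy hur hab (ih + 1)).choose) k with hgdef
  have hg0 : max K 1 ≤ g 0 := (exists_RS_Lspec hp hy hur hab (max K 1)).choose_spec.1
  have hgS : ∀ k, g k + 1 ≤ g (k+1) :=
    fun k => (exists_RS_Lspec hp hy hur hab (g k + 1)).choose_spec.1
  have hgRS : ∀ k, RS y a b (Lspec hp hy (g k)) := by
    intro k
    cases k with
    | zero => exact (exists_RS_Lspec hp hy hur hab (max K 1)).choose_spec.2
    | succ k => exact (exists_RS_Lspec hp hy hur hab (g k + 1)).choose_spec.2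
  have hgmono : StrictMono g := strictMono_nat_of_lt_succ (fun k => by have := hgS k; omega)
  have hgge : ∀ k, max K 1 ≤ g k := by
    intro k
    induction k with
    | zero => exact hg0
    | succ k ih => have := hgS k; omega
  have hquasi : ∀ k, IsQuasiperiod (cw hp hy) (Lspec hp hy (g k)) := by
    intro k
    apply isQuasiperiod_Lspec hp hy hur hab (by have := hgge k; omega) (hgRS k)
    exact hK (g k) (by have := hgge k; omega)
  apply Set.infinite_of_injective_forall_mem
    (f := fun k => Lspec hp hy (g k)) (s := {q | IsQuasiperiod (cw hp hy) q})
  · intro k1 k2 hk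
    simp only [] at hk
    have h1 := (Lspec_mem hp hy (g k1)).1
    have h2 := (Lspec_mem hp hy (g k2)).1
    have : g k1 = g k2 := by rw [← h1, ← h2, hk]
    exact hgmono.injective this
  · intro k
    exact hquasi k

end Factors
end Sturm

/-- every Sturmian subshift is multi-scale quasiperiodic: for every uniformly
recurrent word `y` over a two-letter alphabet with `p_n(y) = n+1`, there is a multi-scale
quasiperiodic word with the same factors as `y`. -/
theorem sturmian_subshift_multiScaleQuasiperiodic {A : Type*} (a b : A) (hab : a ≠ b)
    (y : ℕ → A) (hy : ∀ n, y n = a ∨ y n = b)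
    (hur : ∀ u : List A, IsFactor y u →
      ∃ n : ℕ, 1 ≤ n ∧ ∀ v : List A, v.length = n → IsFactor y v → u <:+: v)
    (hp : ∀ n : ℕ, complexity y n = n + 1) :
    ∃ x : ℕ → A, MultiScaleQuasiperiodic x ∧ ∀ u : List A, IsFactor x u ↔ IsFactor y u := by
  have hp' : ∀ n : ℕ, Set.ncard {u : List A | u.length = n ∧ IsFactor y u} = n + 1 := hp
  exact ⟨Sturm.cw hp' hy, Sturm.multiScale hp' hy hur hab,
    fun u => Sturm.isFactor_cw_iff hp' hy hur hab u⟩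
end

section
/- There exists a quasiperiodic infinite word that is not recurrent, i.e. a quasiperiodic word having a factor that occurs only finitely many times. -/
open Filter MeasureTheory Topology

/-- there exists a quasiperiodic infinite word that is not recurrent. -/
theorem exists_quasiperiodic_not_recurrent :
    ∃ (x : ℕ → Fin 2) (u : List (Fin 2)),
      (∃ q, IsQuasiperiod x q) ∧ IsFactor x u ∧ {i : ℕ | OccursAt x u i}.Finite := by
  -- x = aba(ab)^ω with a=0, b=1; quasiperiod aba = [0,1,0]; u = aa = [0,0].
  set x : ℕ → Fin 2 := fun n => if n = 1 ∨ (4 ≤ n ∧ Even n) then 1 else 0 with hx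
  have hx0 : ∀ n, ¬(n = 1 ∨ (4 ≤ n ∧ Even n)) → x n = 0 := fun n h => if_neg h
  have hx1 : ∀ n, (n = 1 ∨ (4 ≤ n ∧ Even n)) → x n = 1 := fun n h => if_pos h
  refine ⟨x, [0, 0], ⟨[0, 1, 0], fun n => if n = 0 then 0 else 2 * n + 1, ?_, rfl, ?_, ?_⟩,
    ⟨2, ?_⟩, ?_⟩
  · -- StrictMono
    apply strictMono_nat_of_lt_succ
    intro n
    simp only [Nat.succ_ne_zero, if_false]
    split <;> omega
  · -- occurrences
    intro n
    by_cases hn : n = 0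
    · subst hn
      simp only [if_pos rfl]
      intro k
      fin_cases k <;> simp [hx] <;> decide
    · simp only [if_neg hn]
      intro k
      fin_cases k
      · show x (2 * n + 1 + 0) = 0
        apply hx0; rintro (h | ⟨-, ⟨m, hm⟩⟩) <;> omega
      · show x (2 * n + 1 + 1) = 1
        apply hx1; right; constructor; omega; exact ⟨n + 1, by ring⟩
      · show x (2 * n + 1 + 2) = 0
        apply hx0; rintro (h | ⟨-, ⟨m, hm⟩⟩) <;> omega
  · -- gaps
    intro n
    by_cases hn : n = 0 <;> simp [hn] <;> omega
  · -- IsFactor [0,0] at position 2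
    intro k
    fin_cases k <;> simp [hx] <;> decide
  · -- occurrences of [0,0] finite: subset of {2}
    apply Set.Finite.subset (Set.finite_singleton 2)
    intro i hi
    have h0 : x (i + 0) = 0 := hi ⟨0, by norm_num⟩
    have h1 : x (i + 1) = 0 := hi ⟨1, by norm_num⟩
    simp only [Set.mem_singleton_iff]
    by_contra hne
    rcases Nat.even_or_odd i with he | ho
    · -- i even, i ≠ 2
      rcases Nat.lt_or_ge i 4 with h4 | h4
      · -- i ∈ {0}
        interval_cases i
        · rw [hx1 (0 + 1) (Or.inl rfl)] at h1; exact absurd h1 (by decide)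
        · obtain ⟨m, hm⟩ := he; omega
        · exact hne rfl
        · obtain ⟨m, hm⟩ := he; omega
      · rw [hx1 (i + 0) (Or.inr ⟨by omega, by simpa using he⟩)] at h0
        exact absurd h0 (by decide)
    · -- i odd: i = 1 gives x i = 1; i ≥ 3 gives x (i+1) = 1
      rcases eq_or_ne i 1 with h | h
      · subst h; rw [hx1 (1 + 0) (Or.inl rfl)] at h0; exact absurd h0 (by decide)
      · have : 4 ≤ i + 1 := by obtain ⟨m, hm⟩ := ho; omega
        rw [hx1 (i + 1) (Or.inr ⟨this, Odd.add_one ho⟩)] at h1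
        exact absurd h1 (by decide)
end

section
/- There exists a quasiperiodic infinite word x and a factor u of x such that u does not have a frequency in x, i.e. the sequence (1/n)·#(u, x_0x_1…x_{n−1}) does not converge as n → ∞. (For example, if x is an infinite word over {0,1} in which the letter 0 has no frequency, then ∫_{aba} x is quasiperiodic and the factor bab has no frequency in it.) -/
open Filter MeasureTheory Topology

/-- Gap sequence: 2 on even phases, 3 on odd phases (phase `j` is `[100^j, 100^(j+1))`). -/
def dd (k : ℕ) : ℕ := if Even (Nat.log 100 k) then 2 else 3

/-- Positions of the letter 1. -/
def ss : ℕ → ℕ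
  | 0 => 1
  | k + 1 => ss k + dd k

-- The infinite word: 1 at positions in the range of `ss`, else 0.
open Classical in
noncomputable def xx (m : ℕ) : Fin 2 := if ∃ k, ss k = m then 1 else 0

lemma dd_ge (k : ℕ) : 2 ≤ dd k := by unfold dd; split <;> norm_num
lemma dd_le (k : ℕ) : dd k ≤ 3 := by unfold dd; split <;> norm_num

lemma ss_succ (k : ℕ) : ss (k + 1) = ss k + dd k := rfl

lemma ss_lb (K : ℕ) : 2 * K + 1 ≤ ss K := by
  induction K with
  | zero => simp [ss]
  | succ k ih => have := dd_ge k; rw [ss_succ]; omega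

lemma ss_ub (K : ℕ) : ss K ≤ 3 * K + 1 := by
  induction K with
  | zero => simp [ss]
  | succ k ih => have := dd_le k; rw [ss_succ]; omega

lemma ss_mono : StrictMono ss := by
  apply strictMono_nat_of_lt_succ
  intro n; rw [ss_succ]; have := dd_ge n; omega

lemma xx_of_mem (k : ℕ) : xx (ss k) = 1 := by
  unfold xx; rw [if_pos ⟨k, rfl⟩]

lemma xx_of_not_mem (m : ℕ) (h : ∀ k, ss k ≠ m) : xx m = 0 := by
  unfold xx; rw [if_neg]; rintro ⟨k, hk⟩; exact h k hk

lemma xx_eq_one_iff (m : ℕ) : xx m = 1 ↔ ∃ k, ss k = m := by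
  constructor
  · intro h; by_contra hc
    rw [xx_of_not_mem m (fun k hk => hc ⟨k, hk⟩)] at h
    exact absurd h (by decide)
  · rintro ⟨k, rfl⟩; exact xx_of_mem k

lemma ss_pred_not (j n : ℕ) : ss j ≠ ss n - 1 := by
  match n with
  | 0 => have := ss_lb j; simp only [ss]; omega
  | m + 1 =>
    intro h
    have h1 : ss (m + 1) = ss m + dd m := rfl
    have h2 := dd_ge m
    have hlt : ss m < ss j := by omega
    have : m < j := ss_mono.lt_iff_lt.mp hlt
    have : ss (m + 1) ≤ ss j := ss_mono.le_iff_le.mpr this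
    omega

lemma ss_succ_not (j n : ℕ) : ss j ≠ ss n + 1 := by
  intro h
  have hlt : ss n < ss j := by omega
  have : n < j := ss_mono.lt_iff_lt.mp hlt
  have : ss (n + 1) ≤ ss j := ss_mono.le_iff_le.mpr this
  have h1 := ss_succ n
  have := dd_ge n
  omega

lemma ss_add_const (a m c : ℕ) (h : ∀ t, t < m → dd (a + t) = c) :
    ss (a + m) = ss a + c * m := by
  induction m with
  | zero => simp
  | succ m ih =>
    have : a + (m + 1) = (a + m) + 1 := by omega
    rw [this, ss_succ, ih (fun t ht => h t (by omega)), h m (by omega)]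
    ring

lemma log_phase (j k : ℕ) (h1 : 100 ^ j ≤ k) (h2 : k < 100 ^ (j + 1)) :
    Nat.log 100 k = j := Nat.log_eq_of_pow_le_of_lt_pow h1 h2

lemma pow_split (j : ℕ) : 100 ^ (j + 1) = 100 ^ j + 99 * 100 ^ j := by ring

lemma ss_phase (j c : ℕ) (hc : dd (100 ^ j) = c) :
    ss (100 ^ (j + 1)) = ss (100 ^ j) + c * (99 * 100 ^ j) := by
  rw [pow_split j]
  apply ss_add_const
  intro t ht
  unfold dd at hc ⊢
  have hl : Nat.log 100 (100 ^ j + t) = j := by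
    apply log_phase <;> [omega; (rw [pow_split j]; omega)]
  have hl' : Nat.log 100 (100 ^ j) = j := by
    apply log_phase <;> [omega; (have : (1:ℕ) ≤ 100 ^ j := Nat.one_le_pow _ _ (by norm_num); rw [pow_split j]; omega)]
  rw [hl]; rw [hl'] at hc; exact hc

lemma dd_even (j : ℕ) (hj : Even j) : dd (100 ^ j) = 2 := by
  unfold dd
  have hl : Nat.log 100 (100 ^ j) = j := by
    apply log_phase
    · omega
    · have : (1:ℕ) ≤ 100 ^ j := Nat.one_le_pow _ _ (by norm_num)
      rw [pow_split j]; omega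
  rw [hl, if_pos hj]

lemma dd_odd (j : ℕ) (hj : ¬ Even j) : dd (100 ^ j) = 3 := by
  unfold dd
  have hl : Nat.log 100 (100 ^ j) = j := by
    apply log_phase
    · omega
    · have : (1:ℕ) ≤ 100 ^ j := Nat.one_le_pow _ _ (by norm_num)
      rw [pow_split j]; omega
  rw [hl, if_neg hj]

lemma even_bound (j : ℕ) (hj : Even j) :
    50 * ss (100 ^ (j + 1)) ≤ 101 * 100 ^ (j + 1) := by
  have h := ss_phase j 2 (dd_even j hj)
  have hu := ss_ub (100 ^ j)
  have hp : (1:ℕ) ≤ 100 ^ j := Nat.one_le_pow _ _ (by norm_num)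
  have hs : 100 ^ (j + 1) = 100 * 100 ^ j := by ring
  nlinarith [hp]

lemma odd_bound (j : ℕ) (hj : ¬ Even j) :
    299 * 100 ^ (j + 1) ≤ 100 * ss (100 ^ (j + 1)) := by
  have h := ss_phase j 3 (dd_odd j hj)
  have hl := ss_lb (100 ^ j)
  have hs : 100 ^ (j + 1) = 100 * 100 ^ j := by ring
  nlinarith

lemma occursAt_single (i : ℕ) : OccursAt xx [1] i ↔ xx i = 1 := by
  constructor
  · intro h
    have := h ⟨0, by norm_num⟩
    simpa using this
  · intro h k
    fin_cases k
    simpa using h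

lemma occCount_ss (K : ℕ) : occCount xx [1] (ss K) = K := by
  have hset : {i : ℕ | i + ([1] : List (Fin 2)).length ≤ ss K ∧ OccursAt xx [1] i}
      = ss '' Set.Iio K := by
    ext i
    simp only [Set.mem_setOf_eq, Set.mem_image, Set.mem_Iio, List.length_singleton,
      occursAt_single, xx_eq_one_iff]
    constructor
    · rintro ⟨hle, k, rfl⟩
      exact ⟨k, ss_mono.lt_iff_lt.mp (by omega), rfl⟩
    · rintro ⟨k, hk, rfl⟩
      have := ss_mono hk
      exact ⟨by omega, k, rfl⟩
  rw [occCount, hset, Set.ncard_image_of_injective _ ss_mono.injective,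
    ← Finset.coe_range, Set.ncard_coe_finset, Finset.card_range]

lemma xx_quasi : IsQuasiperiod xx [0, 1, 0] := by
  refine ⟨fun n => ss n - 1, ?_, ?_, ?_, ?_⟩
  · apply strictMono_nat_of_lt_succ
    intro n
    have h1 := ss_lb n
    have h2 := ss_succ n
    have h3 := dd_ge n
    omega
  · simp [ss]
  · intro n k
    have h1 := ss_lb n
    fin_cases k
    · show xx (ss n - 1 + 0) = 0
      rw [Nat.add_zero]
      exact xx_of_not_mem _ (fun j => ss_pred_not j n)
    · show xx (ss n - 1 + 1) = 1
      have : ss n - 1 + 1 = ss n := by omega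
      rw [this]; exact xx_of_mem n
    · show xx (ss n - 1 + 2) = 0
      have : ss n - 1 + 2 = ss n + 1 := by omega
      rw [this]
      exact xx_of_not_mem _ (fun j => ss_succ_not j n)
  · intro n
    have h1 := ss_lb n
    have h2 := ss_succ n
    have h3 := dd_le n
    simp only [List.length_cons, List.length_nil]
    omega

lemma ratio_even (j : ℕ) (hj : Even j) :
    (50 : ℝ) / 101 ≤ (occCount xx [1] (ss (100 ^ (j + 1))) : ℝ) / (ss (100 ^ (j + 1)) : ℝ) := by
  have hKpos := ss_lb (100 ^ (j + 1))
  have hb := even_bound j hj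
  rw [occCount_ss, div_le_div_iff₀ (by norm_num) (Nat.cast_pos.mpr (by omega))]
  calc (50 : ℝ) * (ss (100 ^ (j + 1)) : ℝ) = ((50 * ss (100 ^ (j + 1)) : ℕ) : ℝ) := by push_cast; ring
    _ ≤ ((101 * 100 ^ (j + 1) : ℕ) : ℝ) := by exact_mod_cast hb
    _ = ((100 ^ (j + 1) : ℕ) : ℝ) * 101 := by push_cast; ring

lemma ratio_odd (j : ℕ) (hj : ¬ Even j) :
    (occCount xx [1] (ss (100 ^ (j + 1))) : ℝ) / (ss (100 ^ (j + 1)) : ℝ) ≤ (100 : ℝ) / 299 := by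
  have hKpos := ss_lb (100 ^ (j + 1))
  have hb := odd_bound j hj
  rw [occCount_ss, div_le_div_iff₀ (Nat.cast_pos.mpr (by omega)) (by norm_num)]
  calc ((100 ^ (j + 1) : ℕ) : ℝ) * 299 = ((299 * 100 ^ (j + 1) : ℕ) : ℝ) := by push_cast; ring
    _ ≤ ((100 * ss (100 ^ (j + 1)) : ℕ) : ℝ) := by exact_mod_cast hb
    _ = (100 : ℝ) * (ss (100 ^ (j + 1)) : ℝ) := by push_cast; ring

lemma ss_pow_large (N j : ℕ) (hN : N ≤ j) : N ≤ ss (100 ^ (j + 1)) := by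
  have h1 : j + 1 < 100 ^ (j + 1) := Nat.lt_pow_self (by norm_num : (1:ℕ) < 100)
  have h2 := ss_lb (100 ^ (j + 1))
  omega


/-- there exists a quasiperiodic infinite word with a factor that has no
frequency. -/
theorem exists_quasiperiodic_without_frequencies :
    ∃ (x : ℕ → Fin 2) (u : List (Fin 2)),
      (∃ q, IsQuasiperiod x q) ∧ IsFactor x u ∧
      ¬ ∃ L : ℝ, Filter.Tendsto (fun n : ℕ => (occCount x u n : ℝ) / n)
        Filter.atTop (nhds L) := by
  refine ⟨xx, [1], ⟨[0, 1, 0], xx_quasi⟩, ⟨1, ?_⟩, ?_⟩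
  · exact (occursAt_single 1).mpr (xx_of_mem 0)
  · rintro ⟨L, hL⟩
    rw [Metric.tendsto_atTop] at hL
    obtain ⟨N, hN⟩ := hL (1 / 20) (by norm_num)
    have hEv : dist ((occCount xx [1] (ss (100 ^ (2 * N + 1))) : ℝ) / (ss (100 ^ (2 * N + 1)) : ℝ)) L < 1 / 20 :=
      hN _ (ss_pow_large N (2 * N) (by omega))
    have hOd : dist ((occCount xx [1] (ss (100 ^ (2 * N + 1 + 1))) : ℝ) / (ss (100 ^ (2 * N + 1 + 1)) : ℝ)) L < 1 / 20 :=
      hN _ (ss_pow_large N (2 * N + 1) (by omega))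
    have h1 := ratio_even (2 * N) ⟨N, by ring⟩
    have h2 := ratio_odd (2 * N + 1) (by simp [Nat.even_add_one, parity_simps])
    rw [Real.dist_eq, abs_lt] at hEv hOd
    linarith
end

section
/- Let x be an infinite word with quasiperiod q, let (i_n)_{n∈ℕ} be the strictly increasing enumeration of all occurrence positions of q in x, and let ∂x/∂q be the infinite word over the alphabet {0, 1, …, |q|−1} whose k-th letter is |q| − (i_{k+1} − i_k). Then integrating recovers x: ∫_q (∂x/∂q) = x, i.e. x equals the concatenation σ_q((∂x/∂q)_0) σ_q((∂x/∂q)_1) σ_q((∂x/∂q)_2) …, where σ_q sends a letter j to the prefix of q of length |q| − j. -/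
open Filter MeasureTheory Topology

/-- integrating the derivative recovers the word: if `q` is a quasiperiod
of `x` and `(i_n)` is the strictly increasing enumeration of all occurrence positions of
`q` in `x`, then `∫_q (∂x/∂q) = x`, where `(∂x/∂q)_k = |q| - (i_{k+1} - i_k)`. -/
theorem integrate_derivative_eq_self {A : Type*}
    (x : ℕ → A) (q : List A) (hq : q ≠ []) (h : IsQuasiperiod x q)
    (i : ℕ → ℕ) (hmono : StrictMono i)
    (hocc : ∀ n, OccursAt x q (i n))
    (hall : ∀ m, OccursAt x q m → ∃ n, i n = m) :
    integrate q hq (fun k => q.length - (i (k + 1) - i k)) = x := by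
  obtain ⟨i', hmono', h0', hocc', hgap'⟩ := h
  -- i 0 = 0
  have hi0 : i 0 = 0 := by
    obtain ⟨n, hn⟩ := hall 0 (h0' ▸ hocc' 0)
    have := hmono.monotone (Nat.zero_le n)
    omega
  have hge : ∀ n, n ≤ i n := fun n => hmono.le_apply
  -- gaps of i are at most |q|
  have hgap : ∀ n, i (n + 1) ≤ i n + q.length := by
    intro n
    have hex : ∃ m, i n < i' m := ⟨i n + 1, lt_of_lt_of_le (Nat.lt_succ_self _)
      (hmono'.le_apply)⟩
    classical
    have hP : i n < i' (Nat.find hex) := Nat.find_spec hex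
    have hm0ne : Nat.find hex ≠ 0 := by
      intro h0
      rw [h0, h0'] at hP; omega
    obtain ⟨m1, hm1⟩ := Nat.exists_eq_succ_of_ne_zero hm0ne
    rw [hm1, Nat.succ_eq_add_one] at hP
    have hnotP : ¬ i n < i' m1 := Nat.find_min hex (by rw [hm1]; exact Nat.lt_succ_self m1)
    have hle : i' (m1 + 1) ≤ i' m1 + q.length := by
      have := hgap' m1
      have := hmono' (Nat.lt_succ_self m1)
      omega
    obtain ⟨k, hk⟩ := hall (i' (m1 + 1)) (hocc' (m1 + 1))
    have hkgt : n < k := by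
      by_contra hle'
      have := hmono.monotone (Nat.le_of_not_lt hle')
      omega
    have hstep : i (n + 1) ≤ i k := hmono.monotone hkgt
    omega
  -- blockStart equals i
  have hbs : ∀ n, blockStart q (fun k => q.length - (i (k + 1) - i k)) n = i n := by
    intro n
    induction n with
    | zero => simpa [blockStart] using hi0.symm
    | succ n ih =>
      have h1 := hgap n
      have h2 : i n < i (n + 1) := hmono (Nat.lt_succ_self n)
      simp only [blockStart, ih, Nat.succ_eq_add_one]
      omega
  funext m
  unfold integrate
  simp only [hbs]
  set N := Nat.findGreatest (fun j => i j ≤ m) m with hN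
  have hiN : i N ≤ m := by
    have := Nat.findGreatest_spec (P := fun j => i j ≤ m) (Nat.zero_le m)
      (by simpa using hi0.le.trans (Nat.zero_le m))
    simpa [← hN] using this
  have hlt : m < i (N + 1) := by
    by_cases hc : N + 1 ≤ m
    · have := Nat.findGreatest_is_greatest (P := fun j => i j ≤ m) (k := N + 1)
        (by omega) hc
      simpa using Nat.lt_of_not_le this
    · have := hge (N + 1)
      omega
  have hlen : m - i N < q.length := by
    have := hgap N
    omega
  have hkey := hocc N ⟨m - i N, hlen⟩
  simp only [Fin.val_mk] at hkey
  rw [show i N + (m - i N) = m from by omega] at hkey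
  rw [hkey]
  congr 1
  exact Fin.ext (by simp [← hN, Nat.mod_eq_of_lt hlen])
end
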